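/- arXiv:2305.01993 — 3 statements merged into one kernel-verified Lean document; each statement's English description precedes it below -/
import Mathlib

section
/- Let M be a matroid on a finite ground set E, let k be a natural number, and let K_1, …, K_k ⊆ E be sets such that r(K_i) ≥ k for every i ∈ {1, …, k}. Then there exist elements v_1, …, v_k with v_i ∈ K_i for each i, the v_i pairwise distinct, and {v_1, …, v_k} an independent set of M (in particular of size k with exactly one chosen element in each K_i). -/
/-- A matroid on a finite ground set `E`, given by its family of independent sets
satisfying the independence axioms (I1), (I2), (I3). -/
structure FinMatroid (α : Type*) [DecidableEq α] where
  /-- the finite ground set -/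
  E : Finset α
  /-- the family of independent sets -/
  Indep : Finset α → Prop
  /-- independent sets are subsets of the ground set -/
  indep_subset_ground : ∀ ⦃I⦄, Indep I → I ⊆ E
  /-- (I1): the empty set is independent -/
  empty_indep : Indep ∅
  /-- (I2): subsets of independent sets are independent -/
  indep_subset : ∀ ⦃I J⦄, Indep J → I ⊆ J → Indep I
  /-- (I3): the exchange axiom -/
  indep_exchange : ∀ ⦃I J⦄, Indep I → Indep J → I.card < J.card →
    ∃ v ∈ J, v ∉ I ∧ Indep (insert v I)

/-- The rank of a set `X`: the maximum cardinality of an independent subset of `X`. -/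
noncomputable def FinMatroid.r {α : Type*} [DecidableEq α] (M : FinMatroid α)
    (X : Finset α) : ℕ :=
  sSup {n : ℕ | ∃ I ⊆ X, M.Indep I ∧ I.card = n}

lemma FinMatroid.exists_indep_of_le_r {α : Type*} [DecidableEq α] (M : FinMatroid α)
    {X : Finset α} {k : ℕ} (h : k ≤ M.r X) :
    ∃ I ⊆ X, M.Indep I ∧ k ≤ I.card := by
  have hmem : M.r X ∈ {n : ℕ | ∃ I ⊆ X, M.Indep I ∧ I.card = n} := by
    apply Nat.sSup_mem
    · exact ⟨0, ∅, by simp, M.empty_indep, rfl⟩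
    · exact ⟨X.card, fun n ⟨I, hIX, _, hc⟩ => hc ▸ Finset.card_le_card hIX⟩
  obtain ⟨I, hIX, hI, hc⟩ := hmem
  exact ⟨I, hIX, hI, hc ▸ h⟩

theorem exists_indep_transversal_of_rank_ge {α : Type*} [DecidableEq α]
    (M : FinMatroid α) (k : ℕ) (K : Fin k → Finset α)
    (hK : ∀ i, K i ⊆ M.E) (hr : ∀ i, k ≤ M.r (K i)) :
    ∃ v : Fin k → α, (∀ i, v i ∈ K i) ∧ Function.Injective v ∧
      M.Indep (Finset.image v Finset.univ) := by
  rcases Nat.eq_zero_or_pos k with hk0 | hk0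
  · subst hk0
    refine ⟨Fin.elim0, fun i => i.elim0, fun i => i.elim0, ?_⟩
    have : (Finset.univ : Finset (Fin 0)) = ∅ := rfl
    simp [this, M.empty_indep]
  -- α is nonempty
  obtain ⟨I0, _, _, hI0c⟩ := M.exists_indep_of_le_r (hr ⟨0, hk0⟩)
  obtain ⟨a, _⟩ := Finset.card_pos.mp (lt_of_lt_of_le hk0 hI0c)
  -- main induction
  have main : ∀ j, j ≤ k → ∃ v : Fin k → α,
      (∀ i : Fin k, (i : ℕ) < j → v i ∈ K i) ∧
      (∀ i i' : Fin k, (i : ℕ) < j → (i' : ℕ) < j → v i = v i' → i = i') ∧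
      M.Indep ((Finset.univ.filter (fun i : Fin k => (i : ℕ) < j)).image v) ∧
      ((Finset.univ.filter (fun i : Fin k => (i : ℕ) < j)).image v).card = j := by
    intro j
    induction j with
    | zero =>
      intro _
      refine ⟨fun _ => a, by omega, by omega, ?_, ?_⟩ <;> simp [M.empty_indep]
    | succ j ih =>
      intro hj
      obtain ⟨v, hv1, hv2, hv3, hv4⟩ := ih (Nat.le_of_succ_le hj)
      set S := (Finset.univ.filter (fun i : Fin k => (i : ℕ) < j)).image v with hS
      have hjk : j < k := hj
      obtain ⟨I, hIX, hI, hIc⟩ := M.exists_indep_of_le_r (hr ⟨j, hjk⟩)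
      have hcard : S.card < I.card := by omega
      obtain ⟨w, hwI, hwS, hwind⟩ := M.indep_exchange hv3 hI hcard
      refine ⟨Function.update v ⟨j, hjk⟩ w, ?_, ?_, ?_, ?_⟩
      · intro i hi
        rcases eq_or_ne i ⟨j, hjk⟩ with rfl | hne
        · simpa using hIX hwI
        · rw [Function.update_of_ne hne]
          have : (i : ℕ) < j := by
            rcases Nat.lt_succ_iff_lt_or_eq.mp hi with h | h
            · exact h
            · exact absurd (Fin.ext h) hne
          exact hv1 i this
      · intro i i' hi hi' heq
        rcases eq_or_ne i ⟨j, hjk⟩ with rfl | hne <;>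
          rcases eq_or_ne i' ⟨j, hjk⟩ with rfl | hne'
        · rfl
        · exfalso
          rw [Function.update_self, Function.update_of_ne hne'] at heq
          have hi'j : (i' : ℕ) < j := by
            rcases Nat.lt_succ_iff_lt_or_eq.mp hi' with h | h
            · exact h
            · exact absurd (Fin.ext h) hne'
          exact hwS (heq ▸ Finset.mem_image.mpr ⟨i', by simp [hi'j], rfl⟩)
        · exfalso
          rw [Function.update_self, Function.update_of_ne hne] at heq
          have hij : (i : ℕ) < j := by
            rcases Nat.lt_succ_iff_lt_or_eq.mp hi with h | h
            · exact h
            · exact absurd (Fin.ext h) hne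
          exact hwS (heq ▸ Finset.mem_image.mpr ⟨i, by simp [hij], rfl⟩)
        · rw [Function.update_of_ne hne, Function.update_of_ne hne'] at heq
          have hij : (i : ℕ) < j := by
            rcases Nat.lt_succ_iff_lt_or_eq.mp hi with h | h
            · exact h
            · exact absurd (Fin.ext h) hne
          have hi'j : (i' : ℕ) < j := by
            rcases Nat.lt_succ_iff_lt_or_eq.mp hi' with h | h
            · exact h
            · exact absurd (Fin.ext h) hne'
          exact hv2 i i' hij hi'j heq
      all_goals {
        have hfilt : (Finset.univ.filter (fun i : Fin k => (i : ℕ) < j + 1))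
            = insert (⟨j, hjk⟩ : Fin k) (Finset.univ.filter (fun i : Fin k => (i : ℕ) < j)) := by
          ext i
          simp only [Finset.mem_filter, Finset.mem_univ, true_and, Finset.mem_insert]
          constructor
          · intro h
            rcases Nat.lt_succ_iff_lt_or_eq.mp h with h | h
            · exact Or.inr h
            · exact Or.inl (Fin.ext h)
          · rintro (rfl | h)
            · exact Nat.lt_succ_self j
            · exact Nat.lt_succ_of_lt h
        have himg : (Finset.univ.filter (fun i : Fin k => (i : ℕ) < j)).image
            (Function.update v ⟨j, hjk⟩ w) = S := by
          rw [hS]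
          apply Finset.image_congr
          intro i hi
          simp only [Finset.mem_coe, Finset.mem_filter] at hi
          have : i ≠ ⟨j, hjk⟩ := by
            intro h; rw [h] at hi; exact absurd hi.2 (Nat.lt_irrefl j)
          exact Function.update_of_ne this _ _
        rw [hfilt, Finset.image_insert, himg, Function.update_self]
        first
        | exact hwind
        | rw [Finset.card_insert_of_notMem hwS, hv4]
      }
  obtain ⟨v, hv1, hv2, hv3, _⟩ := main k le_rfl
  have huniv : (Finset.univ.filter (fun i : Fin k => (i : ℕ) < k)) = Finset.univ := by
    ext i; simp [i.isLt]
  refine ⟨v, fun i => hv1 i i.isLt, fun i i' h => hv2 i i' i.isLt i'.isLt h, ?_⟩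
  rw [huniv] at hv3
  exact hv3
end

section
/- Let M be a matroid on a finite ground set E, let k be a natural number, and let K_1, …, K_k ⊆ E be sets such that r(K_i) ≥ i for every i ∈ {1, …, k}. Then there exist elements v_1, …, v_k with v_i ∈ K_i for each i, the v_i pairwise distinct, and {v_1, …, v_k} an independent set of M. -/
/-! Greedy construction: if `v₁, …, vₖ` is an independent transversal of `K₁, …, Kₖ`, then
`K_{k+1}` contains an independent set of size `k + 1 > k`, and the exchange axiom moves one of
its elements `w ∉ {v₁, …, vₖ}` into the transversal while keeping it independent. -/

namespace FinMatroid

variable {α : Type*} [DecidableEq α] (M : FinMatroid α)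

theorem exists_indep_subset_card_eq_of_le_r {X : Finset α} {n : ℕ} (h : n ≤ M.r X) :
    ∃ I ⊆ X, M.Indep I ∧ I.card = n := by
  have hmem : 0 ∈ {n : ℕ | ∃ I ⊆ X, M.Indep I ∧ I.card = n} :=
    ⟨∅, Finset.empty_subset _, M.empty_indep, Finset.card_empty⟩
  have hbdd : BddAbove {n : ℕ | ∃ I ⊆ X, M.Indep I ∧ I.card = n} :=
    ⟨X.card, fun _ ⟨I, hIX, _, hI⟩ => hI ▸ Finset.card_le_card hIX⟩
  obtain ⟨I, hIX, hI, hIcard⟩ := Nat.sSup_mem ⟨0, hmem⟩ hbdd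
  obtain ⟨J, hJI, hJcard⟩ := Finset.exists_subset_card_eq (hIcard ▸ h : n ≤ I.card)
  exact ⟨J, hJI.trans hIX, M.indep_subset hI hJI, hJcard⟩

theorem exists_insert_indep_of_card_lt_r {I X : Finset α} (hI : M.Indep I)
    (h : I.card < M.r X) : ∃ w ∈ X, w ∉ I ∧ M.Indep (insert w I) := by
  obtain ⟨J, hJX, hJ, hJcard⟩ := M.exists_indep_subset_card_eq_of_le_r h
  obtain ⟨w, hwJ, hwI, hw⟩ := M.indep_exchange hI hJ (by omega)
  exact ⟨w, hJX hwJ, hwI, hw⟩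

end FinMatroid

theorem Fin.image_snoc_univ {α : Type*} [DecidableEq α] {n : ℕ} (v : Fin n → α) (w : α) :
    Finset.image (Fin.snoc v w : Fin (n + 1) → α) Finset.univ =
      insert w (Finset.image v Finset.univ) := by
  apply Finset.coe_injective
  simp only [Finset.coe_image, Finset.coe_univ, Set.image_univ, Finset.coe_insert,
    Fin.range_snoc]

theorem exists_indep_transversal_of_rank_ge_index_general {α : Type*} [DecidableEq α]
    (M : FinMatroid α) (k : ℕ) (K : Fin k → Finset α)
    (hr : ∀ i : Fin k, (i : ℕ) + 1 ≤ M.r (K i)) :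
    ∃ v : Fin k → α, (∀ i, v i ∈ K i) ∧ Function.Injective v ∧
      M.Indep (Finset.image v Finset.univ) := by
  induction k with
  | zero => exact ⟨Fin.elim0, Fin.rec0, Fin.rec0, by simpa using M.empty_indep⟩
  | succ n ih =>
    obtain ⟨v, hvK, hv, hvI⟩ := ih (fun i => K i.castSucc) (fun i => hr i.castSucc)
    have hcard : (Finset.image v Finset.univ).card < M.r (K (Fin.last n)) := by
      simpa [Finset.card_image_of_injective _ hv] using hr (Fin.last n)
    obtain ⟨w, hwK, hwv, hwI⟩ := M.exists_insert_indep_of_card_lt_r hvI hcard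
    refine ⟨Fin.snoc v w, fun i => ?_, Fin.snoc_injective_of_injective hv (by simpa using hwv),
      Fin.image_snoc_univ v w ▸ hwI⟩
    induction i using Fin.lastCases with
    | last => simpa using hwK
    | cast j => simpa using hvK j

theorem exists_indep_transversal_of_rank_ge_index {α : Type*} [DecidableEq α]
    (M : FinMatroid α) (k : ℕ) (K : Fin k → Finset α)
    (hK : ∀ i, K i ⊆ M.E) (hr : ∀ i : Fin k, (i : ℕ) + 1 ≤ M.r (K i)) :
    ∃ v : Fin k → α, (∀ i, v i ∈ K i) ∧ Function.Injective v ∧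
      M.Indep (Finset.image v Finset.univ) :=
  exists_indep_transversal_of_rank_ge_index_general M k K hr
end

section
/- Let F be a simple graph that is a linear forest, i.e., F is acyclic and every vertex of F has degree at most 2, and let X be a set of vertices. Define the simple graph H on the vertices of X that lie in F, where two distinct vertices u, v ∈ X are adjacent in H if and only if there is a (u,v)-walk in F that is a path whose internal vertices all avoid X (in particular, the edge {u,v} itself qualifies). Then H is acyclic and every vertex of H has degree at most 2; that is, H is a linear forest. -/
/-!
In a graph of maximum degree two, a path arriving at a vertex along one edge can only leave it
along the other one. Hence a path that stops at the first vertex of `X` it meets is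
determined by its first dart, and an `X`-path (a path meeting `X` exactly in its ends) is
determined by any one of its darts. Consequently distinct neighbours of `u` in the signature graph
are reached from `u` along distinct edges of `F`, and distinct edges of the signature graph have
edge-disjoint `X`-paths. For acyclicity, lift a walk from `u` to `v` in the signature graph to a
walk of `F` along the `X`-paths of its edges: since paths in the forest `F` are unique, the lift
uses an edge of the `X`-path of `uv`, so the walk uses `uv`, i.e. every edge is a bridge.
-/

namespace SimpleGraph

variable {V : Type*} {G : SimpleGraph V} {X : Set V}

theorem eq_of_adj_of_encard_neighborSet_le_two {a b c c' : V}
    (hdeg : (G.neighborSet b).encard ≤ 2) (ha : G.Adj b a) (hc : G.Adj b c) (hc' : G.Adj b c')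
    (hca : c ≠ a) (hc'a : c' ≠ a) : c = c' := by
  by_contra hcc'
  have hsub : ({a, c, c'} : Set V) ⊆ G.neighborSet b := by
    rintro w (rfl | rfl | rfl) <;> assumption
  have hcard : ({a, c, c'} : Set V).encard = 3 := by
    rw [Set.encard_insert_of_notMem (by simp [hca.symm, hc'a.symm]), Set.encard_pair hcc']
    rfl
  have := (Set.encard_le_encard hsub).trans hdeg
  rw [hcard] at this
  norm_num at this

namespace Walk

theorem eq_of_isPath_cons (hdeg : ∀ v, (G.neighborSet v).encard ≤ 2) {a b v v' : V}
    (h : G.Adj a b) {p : G.Walk b v} {q : G.Walk b v'} (hp : (cons h p).IsPath)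
    (hq : (cons h q).IsPath) (hv : v ∈ X) (hv' : v' ∈ X)
    (hpX : ∀ z ∈ p.support, z ∈ X → z = v) (hqX : ∀ z ∈ q.support, z ∈ X → z = v') :
    v = v' := by
  induction p generalizing a with
  | nil => exact hqX _ q.start_mem_support hv
  | @cons b c v hbc p ih =>
    cases q with
    | nil => exact (hpX _ (start_mem_support _) hv').symm
    | @cons _ c' _ hbc' q =>
      have hca : c ≠ a := fun hca => (cons_isPath_iff _ _).mp hp |>.2 (by simp [← hca])
      have hc'a : c' ≠ a := fun hca => (cons_isPath_iff _ _).mp hq |>.2 (by simp [← hca])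
      obtain rfl := eq_of_adj_of_encard_neighborSet_le_two (hdeg _) h.symm hbc hbc' hca hc'a
      exact ih hbc hp.of_cons hq.of_cons hv (fun z hz => hpX z (by simp [hz]))
        (fun z hz => hqX z (by simp [hz]))

/-- An `X`-path in Diestel's terminology. -/
structure IsXPath (X : Set V) {u v : V} (p : G.Walk u v) : Prop where
  isPath : p.IsPath
  start_mem : u ∈ X
  end_mem : v ∈ X
  eq_or_eq_of_mem : ∀ z ∈ p.support, z ∈ X → z = u ∨ z = v

variable {u v u' v' : V} {p : G.Walk u v} {q : G.Walk u' v'}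

theorem IsXPath.reverse (hp : p.IsXPath X) : p.reverse.IsXPath X where
  isPath := hp.isPath.reverse
  start_mem := hp.end_mem
  end_mem := hp.start_mem
  eq_or_eq_of_mem z hz hzX := (hp.eq_or_eq_of_mem z (by simpa using hz) hzX).symm

theorem IsXPath.exists_suffix_of_mem_darts (hp : p.IsXPath X) {d : G.Dart} (hd : d ∈ p.darts) :
    ∃ r : G.Walk d.snd v, (cons d.adj r).IsPath ∧ ∀ z ∈ r.support, z ∈ X → z = v := by
  obtain ⟨s, r, rfl⟩ := (isSubwalk_toWalk_adj_iff_mem_darts p).mpr hd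
  have hsplit : (s.append d.adj.toWalk).append r = s.append (cons d.adj r) :=
    (append_assoc _ _ _).symm
  rw [hsplit] at hp
  refine ⟨r, hp.isPath.of_append_right, fun z hz hzX => ?_⟩
  refine (hp.eq_or_eq_of_mem z (by simp [hz]) hzX).resolve_left ?_
  rintro rfl
  exact hp.isPath.disjoint_support_of_append not_nil_cons s.start_mem_support (by simpa using hz)

theorem IsXPath.eq_of_mem_darts (hdeg : ∀ v, (G.neighborSet v).encard ≤ 2)
    (hp : p.IsXPath X) (hq : q.IsXPath X) {d : G.Dart} (hdp : d ∈ p.darts) (hdq : d ∈ q.darts) :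
    v = v' := by
  obtain ⟨r, hr, hrX⟩ := hp.exists_suffix_of_mem_darts hdp
  obtain ⟨r', hr', hr'X⟩ := hq.exists_suffix_of_mem_darts hdq
  exact eq_of_isPath_cons hdeg d.adj hr hr' hp.end_mem hq.end_mem hrX hr'X

theorem IsXPath.sym2_eq_of_mem_edges (hdeg : ∀ v, (G.neighborSet v).encard ≤ 2)
    (hp : p.IsXPath X) (hq : q.IsXPath X) {e : Sym2 V} (hep : e ∈ p.edges) (heq : e ∈ q.edges) :
    s(u, v) = s(u', v') := by
  obtain ⟨d, hdp, rfl⟩ := List.mem_map.mp hep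
  obtain ⟨d', hdq, hdd'⟩ := List.mem_map.mp heq
  have hdp' : d.symm ∈ p.reverse.darts := by simpa using hdp
  rcases (dart_edge_eq_iff d' d).mp hdd' with rfl | rfl
  · have hdq' : d'.symm ∈ q.reverse.darts := by simpa using hdq
    rw [hp.eq_of_mem_darts hdeg hq hdp hdq,
      hp.reverse.eq_of_mem_darts hdeg hq.reverse hdp' hdq']
  · have hdq' : d ∈ q.reverse.darts := by simpa using hdq
    rw [hp.eq_of_mem_darts hdeg hq.reverse hdp hdq',
      hp.reverse.eq_of_mem_darts hdeg hq hdp' hdq, Sym2.eq_swap]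

theorem exists_walk_forall_mem_edges {H : SimpleGraph V} (R : Sym2 V → Sym2 V → Prop)
    (hR : ∀ ⦃u v⦄, H.Adj u v → ∃ p : G.Walk u v, ∀ e ∈ p.edges, R e s(u, v)) {a b : V}
    (w : H.Walk a b) : ∃ p : G.Walk a b, ∀ e ∈ p.edges, ∃ e' ∈ w.edges, R e e' := by
  induction w with
  | nil => exact ⟨nil, by simp⟩
  | cons h w ih =>
    obtain ⟨p, hp⟩ := hR h
    obtain ⟨q, hq⟩ := ih
    refine ⟨p.append q, fun e he => ?_⟩
    rcases List.mem_append.mp (edges_append p q ▸ he) with he | he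
    · exact ⟨_, by simp, hp e he⟩
    · obtain ⟨e', he', hee'⟩ := hq e he
      exact ⟨e', by simp [he'], hee'⟩

end Walk

open Walk

variable (G) in
def signatureGraph (X : Set V) : SimpleGraph V := SimpleGraph.fromRel (fun u v =>
  u ∈ X ∧ v ∈ X ∧ ∃ p : G.Walk u v, p.IsPath ∧ ∀ w ∈ p.support, w ∈ X → w = u ∨ w = v)

theorem signatureGraph_adj {u v : V} :
    (G.signatureGraph X).Adj u v ↔ u ≠ v ∧ ∃ p : G.Walk u v, p.IsXPath X := by
  simp only [signatureGraph, fromRel_adj]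
  refine and_congr_right fun _ => ⟨?_, ?_⟩
  · rintro (⟨hu, hv, p, hp, hpX⟩ | ⟨hv, hu, p, hp, hpX⟩)
    · exact ⟨p, hp, hu, hv, hpX⟩
    · exact ⟨p.reverse, (IsXPath.mk hp hv hu hpX).reverse⟩
  · rintro ⟨p, hp, hu, hv, hpX⟩
    exact Or.inl ⟨hu, hv, p, hp, hpX⟩

theorem IsAcyclic.signatureGraph (hG : G.IsAcyclic) (hdeg : ∀ v, (G.neighborSet v).encard ≤ 2) :
    (G.signatureGraph X).IsAcyclic := by
  classical
  rw [isAcyclic_iff_forall_adj_isBridge]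
  intro u v huv
  rw [isBridge_iff_forall_walk_mem_edges]
  intro w
  obtain ⟨huv, P, hP⟩ := signatureGraph_adj.mp huv
  obtain ⟨L, hL⟩ := exists_walk_forall_mem_edges
    (fun e e' => ∃ x y, e' = s(x, y) ∧ ∃ p : G.Walk x y, p.IsXPath X ∧ e ∈ p.edges)
    (fun x y hxy => by
      obtain ⟨-, p, hp⟩ := signatureGraph_adj.mp hxy
      exact ⟨p, fun e he => ⟨x, y, rfl, p, hp, he⟩⟩) w
  have hPL : P = L.bypass :=
    congrArg Subtype.val ((hG.subsingleton_path u v).elim ⟨P, hP.isPath⟩ ⟨_, L.bypass_isPath⟩)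
  obtain ⟨e, he⟩ := List.exists_mem_of_ne_nil P.edges (edges_eq_nil.not.mpr (not_nil_of_ne huv))
  obtain ⟨e', he', x, y, rfl, p, hp, hep⟩ := hL e (edges_bypass_subset_edges L (hPL ▸ he))
  rwa [hP.sym2_eq_of_mem_edges hdeg hp he hep]

theorem encard_neighborSet_signatureGraph_le (hdeg : ∀ v, (G.neighborSet v).encard ≤ 2) (u : V) :
    ((G.signatureGraph X).neighborSet u).encard ≤ (G.neighborSet u).encard := by
  have hfirst : ∀ v ∈ (G.signatureGraph X).neighborSet u, ∃ c, ∃ h : G.Adj u c,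
      ∃ p : G.Walk u v, p.IsXPath X ∧ ⟨(u, c), h⟩ ∈ p.darts := by
    intro v huv
    obtain ⟨huv, p, hp⟩ := signatureGraph_adj.mp huv
    cases p with
    | nil => exact absurd rfl huv
    | cons h p => exact ⟨_, h, _, hp, by simp⟩
  choose! f hfadj hf using hfirst
  refine Set.encard_le_encard_of_injOn (fun v hv => hfadj v hv) fun v hv v' hv' hvv' => ?_
  obtain ⟨p, hp, hdp⟩ := hf v hv
  obtain ⟨q, hq, hdq⟩ := hf v' hv'
  simp only [hvv'] at hdp
  exact hp.eq_of_mem_darts hdeg hq hdp hdq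

end SimpleGraph

/-- The signature of a linear forest `F` with respect to a vertex set `X`, viewed as a
simple graph on the vertices of `X`: two distinct vertices `u, v ∈ X` are adjacent iff
they are joined in `F` by a path all of whose internal vertices avoid `X`
(in particular, an edge of `F` between them qualifies). This graph is again a linear
forest: it is acyclic and all its degrees are at most two. -/
theorem signature_isLinearForest {V : Type*} (F : SimpleGraph V)
    (hF : F.IsAcyclic) (hdeg : ∀ v, (F.neighborSet v).encard ≤ 2) (X : Set V) :
    let H : SimpleGraph V := SimpleGraph.fromRel (fun u v =>
      u ∈ X ∧ v ∈ X ∧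
        ∃ p : F.Walk u v, p.IsPath ∧ ∀ w ∈ p.support, w ∈ X → w = u ∨ w = v)
    H.IsAcyclic ∧ ∀ v, (H.neighborSet v).encard ≤ 2 :=
  ⟨hF.signatureGraph hdeg, fun v =>
    (F.encard_neighborSet_signatureGraph_le hdeg v).trans (hdeg v)⟩
end
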